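/- arXiv:2508.15412 — 2 statements merged into one kernel-verified Lean document; each statement's English description precedes it below -/
import Mathlib

section
/- For any complex Hadamard matrix H of size n, the intersection T^n ∩ H T^n H† equals the center Z(U(n)) of U(n), i.e. a diagonal unitary A satisfies H† A H diagonal if and only if A is scalar. -/
open Matrix

/-- A complex Hadamard matrix: a unitary matrix all of whose entries have modulus `1/√n`. -/
def IsHadamard (n : ℕ) (H : Matrix (Fin n) (Fin n) ℂ) : Prop :=
  H ∈ Matrix.unitaryGroup (Fin n) ℂ ∧ ∀ i j, ‖H i j‖ = 1 / Real.sqrt n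

/-!
For a diagonal `D`, the `j`-th diagonal entry of `Hᴴ D H` is `∑ᵢ |H i j|² D i i`. When all
entries of `H` have modulus `1/√n` this is `tr D / n` for every `j`, so if `Hᴴ A H` is diagonal
it is the scalar matrix `c • 1` with `c = tr A / n`. Conjugating back by the unitary `H` gives
`A = c • 1`, and unitarity of `A` forces `|c| = 1`. Conversely scalar matrices commute with `H`.
-/

namespace Matrix

variable {ι : Type*} [DecidableEq ι]

theorem IsDiag.eq_smul_one {α : Type*} [Semiring α] {B : Matrix ι ι α} (hB : B.IsDiag)
    {c : α} (hc : ∀ i, B i i = c) : B = c • 1 := by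
  rw [← (isDiag_iff_diagonal_diag B).mp hB, smul_one_eq_diagonal]
  exact congrArg diagonal (funext hc)

variable [Fintype ι]

section Unitary

variable {α : Type*} [CommRing α] [StarRing α] {U : Matrix ι ι α}

theorem conjTranspose_mul_smul_one_mul (hU : U ∈ unitaryGroup ι α) (c : α) :
    Uᴴ * (c • 1) * U = c • 1 := by
  rw [Matrix.mul_smul, mul_one, Matrix.smul_mul, ← star_eq_conjTranspose,
    Unitary.star_mul_self_of_mem hU]

theorem conjTranspose_mul_mul_inj (hU : U ∈ unitaryGroup ι α) {A B : Matrix ι ι α} :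
    Uᴴ * A * U = Uᴴ * B * U ↔ A = B := by
  rw [← star_eq_conjTranspose, Unitary.mul_left_inj ⟨U, hU⟩]
  exact Unitary.mul_right_inj (star ⟨U, hU⟩)

theorem mem_unitary_of_smul_one_mem_unitaryGroup [Nonempty ι] {c : α}
    (hc : c • (1 : Matrix ι ι α) ∈ unitaryGroup ι α) : c ∈ unitary α := by
  have hcc := Unitary.star_mul_self_of_mem hc
  rw [star_smul, star_one, smul_mul_smul_comm, mul_one] at hcc
  rw [Unitary.mem_iff_star_mul_self]
  simpa using congrFun₂ hcc (Classical.arbitrary ι) (Classical.arbitrary ι)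

end Unitary

theorem IsDiag.conjTranspose_mul_mul_apply_self {𝕜 : Type*} [RCLike 𝕜] {D : Matrix ι ι 𝕜}
    (hD : D.IsDiag) (H : Matrix ι ι 𝕜) (j : ι) :
    (Hᴴ * D * H) j j = ∑ i, (‖H i j‖ ^ 2 : 𝕜) * D i i := by
  conv_lhs => rw [← (isDiag_iff_diagonal_diag D).mp hD]
  rw [mul_apply]
  refine Finset.sum_congr rfl fun i _ => ?_
  rw [mul_diagonal, conjTranspose_apply, ← RCLike.conj_mul, RCLike.star_def, diag_apply]
  ring

end Matrix

theorem Complex.exp_arg_mul_I_of_mem_unitary {c : ℂ} (hc : c ∈ unitary ℂ) :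
    exp (arg c * I) = c := by
  conv_rhs => rw [← norm_mul_exp_arg_mul_I c, CStarRing.norm_of_mem_unitary hc]
  rw [ofReal_one, one_mul]

theorem IsHadamard.conjTranspose_mul_mul_apply_self {n : ℕ} {H : Matrix (Fin n) (Fin n) ℂ}
    (hH : IsHadamard n H) {D : Matrix (Fin n) (Fin n) ℂ} (hD : D.IsDiag) (j : Fin n) :
    (Hᴴ * D * H) j j = (n : ℂ)⁻¹ * D.trace := by
  have hsq : ((1 / Real.sqrt n : ℝ) : ℂ) ^ 2 = (n : ℂ)⁻¹ := by
    rw [← Complex.ofReal_pow, div_pow, one_pow, Real.sq_sqrt n.cast_nonneg, one_div,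
      Complex.ofReal_inv, Complex.ofReal_natCast]
  rw [hD.conjTranspose_mul_mul_apply_self, trace, Finset.mul_sum]
  refine Finset.sum_congr rfl fun i _ => ?_
  rw [hH.2, diag_apply]
  exact congrArg (· * D i i) hsq

/-- For any complex Hadamard matrix `H`, the intersection `Tⁿ ∩ H Tⁿ Hᴴ`
is the center of `U(n)`: a diagonal unitary `A` satisfies `Hᴴ A H` diagonal iff `A`
is a scalar unitary. -/
theorem stmt_6 (n : ℕ) (H : Matrix (Fin n) (Fin n) ℂ) (hH : IsHadamard n H)
    (A : Matrix (Fin n) (Fin n) ℂ)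
    (hA : A ∈ Matrix.unitaryGroup (Fin n) ℂ) (hAd : A.IsDiag) :
    (Hᴴ * A * H).IsDiag ↔
      ∃ θ : ℝ, A = Complex.exp (θ * Complex.I) • (1 : Matrix (Fin n) (Fin n) ℂ) := by
  constructor
  · intro hconj
    set c : ℂ := (n : ℂ)⁻¹ * A.trace
    have hconj_scalar : Hᴴ * A * H = c • 1 :=
      hconj.eq_smul_one (hH.conjTranspose_mul_mul_apply_self hAd)
    have hA_scalar : A = c • 1 := by
      rwa [← conjTranspose_mul_smul_one_mul hH.1 c, conjTranspose_mul_mul_inj hH.1]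
        at hconj_scalar
    rcases isEmpty_or_nonempty (Fin n) with _ | _
    · exact ⟨0, Subsingleton.elim _ _⟩
    have hc : c ∈ unitary ℂ := mem_unitary_of_smul_one_mem_unitaryGroup (hA_scalar ▸ hA)
    exact ⟨c.arg, by rw [Complex.exp_arg_mul_I_of_mem_unitary hc, hA_scalar]⟩
  · rintro ⟨θ, rfl⟩
    rw [conjTranspose_mul_smul_one_mul hH.1]
    exact isDiag_one.smul _
end

section
/- For all y, z ∈ ℝ, the matrix H₄(y,z) = (1/2)·[[1,1,1,1],[1,1,−1,−1],[−e^{iy},e^{iy},e^{iz},−e^{iz}],[e^{iy},−e^{iy},e^{iz},−e^{iz}]] is unitary, and the three bases of ℂ⁴ given by the standard basis, the columns of F₄(0), and the columns of H₄(y,z) are pairwise mutually unbiased: every inner product between vectors from two different bases has squared modulus 1/4. -/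
/-!
Write `e = exp(iy)`, `f = exp(iz)`. Then `2 F₄(0)`, `2 H₄(y,z)` and `2 F₄(0)ᴴ H₄(y,z)` all have
unimodular entries (the last one has entries `±1, ±f, ±ie`), so every entry of the three matrices
has squared modulus `1/4`. The columns of `2 H₄(y,z)` are orthogonal of norm `2` because
`ē e = f̄ f = 1`.
-/

open Matrix Complex

/-- The complex Hadamard matrix `F₄(0)`. -/
noncomputable def F40 : Matrix (Fin 4) (Fin 4) ℂ :=
  (1 / 2 : ℂ) • !![1, 1, 1, 1; 1, 1, -1, -1; 1, -1, I, -I; 1, -1, -I, I]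

/-- The two-parameter family `H₄(y,z)` of 4×4 matrices. -/
noncomputable def H4 (y z : ℝ) : Matrix (Fin 4) (Fin 4) ℂ :=
  (1 / 2 : ℂ) • !![1, 1, 1, 1;
                   1, 1, -1, -1;
                   -Complex.exp (y * I), Complex.exp (y * I),
                     Complex.exp (z * I), -Complex.exp (z * I);
                   Complex.exp (y * I), -Complex.exp (y * I),
                     Complex.exp (z * I), -Complex.exp (z * I)]

noncomputable def hadamard4 (e f : ℂ) : Matrix (Fin 4) (Fin 4) ℂ :=
  (1 / 2 : ℂ) • !![1, 1, 1, 1; 1, 1, -1, -1; -e, e, f, -f; e, -e, f, -f]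

theorem H4_eq_hadamard4 (y z : ℝ) : H4 y z = hadamard4 (exp (y * I)) (exp (z * I)) := rfl

theorem norm_sq_half_smul_apply {m n : Type*} {M : Matrix m n ℂ}
    (hM : ∀ i j, ‖M i j‖ = 1) (i : m) (j : n) : ‖((1 / 2 : ℂ) • M) i j‖ ^ 2 = 1 / 4 := by
  rw [Matrix.smul_apply, smul_eq_mul, norm_mul, hM]
  norm_num

theorem norm_sq_F40_apply (i j : Fin 4) : ‖F40 i j‖ ^ 2 = 1 / 4 :=
  norm_sq_half_smul_apply (fun i j => by fin_cases i <;> fin_cases j <;> simp) i j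

theorem norm_sq_hadamard4_apply {e f : ℂ} (he : ‖e‖ = 1) (hf : ‖f‖ = 1) (i j : Fin 4) :
    ‖hadamard4 e f i j‖ ^ 2 = 1 / 4 :=
  norm_sq_half_smul_apply (fun i j => by fin_cases i <;> fin_cases j <;> simp [he, hf]) i j

theorem hadamard4_conjTranspose_mul_self {e f : ℂ} (he : ‖e‖ = 1) (hf : ‖f‖ = 1) :
    (hadamard4 e f)ᴴ * hadamard4 e f = 1 := by
  have he' : starRingEnd ℂ e * e = 1 := by rw [conj_mul', he]; norm_num
  have hf' : starRingEnd ℂ f * f = 1 := by rw [conj_mul', hf]; norm_num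
  ext i j
  fin_cases i <;> fin_cases j <;>
    simp [hadamard4, mul_apply, Fin.sum_univ_four, one_apply, map_ofNat] <;>
    first
    | ring1
    | linear_combination (1 / 2 : ℂ) * he'
    | linear_combination (-1 / 2 : ℂ) * he'
    | linear_combination (1 / 2 : ℂ) * hf'
    | linear_combination (-1 / 2 : ℂ) * hf'

theorem hadamard4_mem_unitaryGroup {e f : ℂ} (he : ‖e‖ = 1) (hf : ‖f‖ = 1) :
    hadamard4 e f ∈ unitaryGroup (Fin 4) ℂ :=
  mem_unitaryGroup_iff'.mpr (hadamard4_conjTranspose_mul_self he hf)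

theorem conjTranspose_F40_mul_hadamard4 (e f : ℂ) :
    F40ᴴ * hadamard4 e f =
      (1 / 2 : ℂ) • !![1, 1, f, -f; 1, 1, -f, f; I * e, -(I * e), 1, 1; -(I * e), I * e, 1, 1] := by
  ext i j
  fin_cases i <;> fin_cases j <;>
    simp [F40, hadamard4, mul_apply, Fin.sum_univ_four, map_ofNat] <;> ring

theorem norm_sq_conjTranspose_F40_mul_hadamard4_apply {e f : ℂ} (he : ‖e‖ = 1) (hf : ‖f‖ = 1)
    (j k : Fin 4) : ‖(F40ᴴ * hadamard4 e f) j k‖ ^ 2 = 1 / 4 := by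
  rw [conjTranspose_F40_mul_hadamard4]
  exact norm_sq_half_smul_apply (fun i j => by fin_cases i <;> fin_cases j <;> simp [he, hf]) j k

/-- For all `y, z ∈ ℝ`, the matrix `H₄(y,z)` is unitary, and the standard
basis, the columns of `F₄(0)` and the columns of `H₄(y,z)` form three pairwise mutually
unbiased bases of ℂ⁴: every inner product between vectors of two distinct bases has
squared modulus `1/4`. -/
theorem stmt_19 (y z : ℝ) :
    H4 y z ∈ Matrix.unitaryGroup (Fin 4) ℂ ∧
    (∀ i j : Fin 4, ‖F40 i j‖ ^ 2 = 1 / 4) ∧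
    (∀ i j : Fin 4, ‖H4 y z i j‖ ^ 2 = 1 / 4) ∧
    (∀ j k : Fin 4,
      ‖∑ a : Fin 4, star (F40 a j) * H4 y z a k‖ ^ 2 = 1 / 4) := by
  have hy : ‖exp (y * I)‖ = 1 := norm_exp_ofReal_mul_I y
  have hz : ‖exp (z * I)‖ = 1 := norm_exp_ofReal_mul_I z
  rw [H4_eq_hadamard4]
  exact ⟨hadamard4_mem_unitaryGroup hy hz, norm_sq_F40_apply, norm_sq_hadamard4_apply hy hz,
    norm_sq_conjTranspose_F40_mul_hadamard4_apply hy hz⟩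
end
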